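/- (Lemma, part (ii)) Let $Y(x',x,\theta) := E_{R_\theta}(p_2 \mid p_1 = x_1)$. Then the regression curve of $p_2$ on $p_1$ with respect to the posterior predictive distribution based on the whole infinite sample equals a conditional expectation under $\Pi_{\mathbb{N}}$: $E_{(R^*_{\mathbb{N},x'})^R}(p_2 \mid p_1 = x_1) = E_{\Pi_{\mathbb{N}}}\big(Y \,\big|\, (\pi'_{\mathbb{N}}, \pi_{1,\mathbb{N}}) = (x', x_1)\big)$, $\Pi_{\mathbb{N}}$-almost everywhere. -/

import Mathlib

open MeasureTheory ProbabilityTheory Filter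
open scoped ENNReal

/-- The joint distribution `Π_m` of the sample (of shape `α`), a new observation and the
parameter: `Π_m(A' × A × T) = ∫_T R_θ(A) S_θ(A') dQ(θ)`. -/
noncomputable def PiM {Θ Ω₁ Ω₂ α : Type*} [MeasurableSpace Θ] [MeasurableSpace Ω₁]
    [MeasurableSpace Ω₂] [MeasurableSpace α]
    (Q : Measure Θ) (S : Kernel Θ α) (R : Kernel Θ (Ω₁ × Ω₂)) :
    Measure (α × (Ω₁ × Ω₂) × Θ) :=
  (Q ⊗ₘ (S ×ₖ R)).map fun p => (p.2.1, p.2.2, p.1)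

/-- `g` is (a version of) the regression curve of the second coordinate `p₂` on the first
coordinate `p₁` under the distribution `ν` on `Ω₁ × ℝ`, i.e. `g x₁ = E_ν(p₂ | p₁ = x₁)`. -/
def IsRegCurve {Ω₁ : Type*} [MeasurableSpace Ω₁] (ν : Measure (Ω₁ × ℝ)) (g : Ω₁ → ℝ) : Prop :=
  Integrable (fun x : Ω₁ × ℝ => x.2) ν ∧
  ∀ A₁ : Set Ω₁, MeasurableSet A₁ →
    ∫ x in Prod.fst ⁻¹' A₁, x.2 ∂ν = ∫ x in Prod.fst ⁻¹' A₁, g x.1 ∂ν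

/-- `post` is a posterior distribution for the prior `Q` and the sampling kernel `S`. -/
def IsPosterior {Θ α : Type*} [MeasurableSpace Θ] [MeasurableSpace α]
    (Q : Measure Θ) (S : Kernel Θ α) (post : Kernel α Θ) : Prop :=
  ∀ (A' : Set α) (T : Set Θ), MeasurableSet A' → MeasurableSet T →
    ∫⁻ θ in T, S θ A' ∂Q = ∫⁻ x' in A', post x' T ∂(Q.bind fun θ => S θ)

/-! Under `Π_ℕ`, both sides are versions of the conditional expectation of the response `x₂`
given `(x', x₁)`. Disintegrating `Π_ℕ` over `(θ, x')`, the new observation has law `R_θ`, so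
`r θ x₁` and `x₂` have the same integrals over every event `{(x', x₁) ∈ B}`. Disintegrating it
instead over the sample `x'`, the posterior turns the law of `(x', x)` into `P ⊗ (R ∘ post)` with
`P` the marginal of the sample, so `m* x' x₁` and `x₂` have the same integrals over these events
too. The finite second moment makes `x₂` integrable, and a regression curve is then integrable
because truncating it at the levels `{0 ≤ g ≤ n}` bounds its `L¹` norm by twice that of `x₂`. -/

section Truncation

variable {α : Type*} {m m0 : MeasurableSpace α} {μ : Measure α} [IsFiniteMeasure μ]
  {f v : α → ℝ}

theorem lintegral_ofReal_le_of_forall_setIntegral_eq (hm : m ≤ m0) (hf : Measurable[m] f)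
    (h : ∀ s, MeasurableSet[m] s → ∫ x in s, f x ∂μ = ∫ x in s, v x ∂μ) :
    ∫⁻ x, ENNReal.ofReal (f x) ∂μ ≤ ∫⁻ x, ‖v x‖ₑ ∂μ := by
  set s : ℕ → Set α := fun n => {x | 0 ≤ f x ∧ f x ≤ n}
  have hs : ∀ n, MeasurableSet[m] (s n) := fun n =>
    (measurableSet_le measurable_const hf).inter (measurableSet_le hf measurable_const)
  have hmono : Monotone s := fun n k hnk x hx => ⟨hx.1, hx.2.trans (by exact_mod_cast hnk)⟩
  have hsupp : (fun x => ENNReal.ofReal (f x)).support ⊆ ⋃ n, s n := fun x hx =>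
    have hx : 0 < f x := by simpa using hx
    Set.mem_iUnion.2 ⟨⌈f x⌉₊, hx.le, Nat.le_ceil _⟩
  rw [← setLIntegral_eq_of_support_subset hsupp,
    setLIntegral_iUnion_of_directed _ hmono.directed_le]
  refine iSup_le fun n => ?_
  have hbdd : ∀ x ∈ s n, 0 ≤ f x ∧ ‖f x‖ ≤ n := fun x hx =>
    ⟨hx.1, by rw [Real.norm_eq_abs, abs_of_nonneg hx.1]; exact hx.2⟩
  have hfs : IntegrableOn f (s n) μ :=
    Measure.integrableOn_of_bounded (measure_ne_top _ _)
      (hf.mono hm le_rfl).aestronglyMeasurable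
      (ae_restrict_of_forall_mem (hm _ (hs n)) fun x hx => (hbdd x hx).2)
  calc ∫⁻ x in s n, ENNReal.ofReal (f x) ∂μ = ENNReal.ofReal (∫ x in s n, f x ∂μ) :=
        (ofReal_integral_eq_lintegral_ofReal hfs
          (ae_restrict_of_forall_mem (hm _ (hs n)) fun x hx => (hbdd x hx).1)).symm
    _ = ENNReal.ofReal (∫ x in s n, v x ∂μ) := by rw [h _ (hs n)]
    _ ≤ ∫⁻ x in s n, ‖v x‖ₑ ∂μ :=
        (Real.ofReal_le_enorm _).trans (enorm_integral_le_lintegral_enorm _)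
    _ ≤ ∫⁻ x, ‖v x‖ₑ ∂μ := setLIntegral_le_lintegral _ _

theorem lintegral_enorm_le_of_forall_setIntegral_eq (hm : m ≤ m0) (hf : Measurable[m] f)
    (h : ∀ s, MeasurableSet[m] s → ∫ x in s, f x ∂μ = ∫ x in s, v x ∂μ) :
    ∫⁻ x, ‖f x‖ₑ ∂μ ≤ 2 * ∫⁻ x, ‖v x‖ₑ ∂μ := by
  have hneg : ∫⁻ x, ENNReal.ofReal (-f x) ∂μ ≤ ∫⁻ x, ‖-v x‖ₑ ∂μ :=
    lintegral_ofReal_le_of_forall_setIntegral_eq hm hf.neg fun s hs => by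
      rw [integral_neg, integral_neg, h s hs]
  have henorm : ∀ x, ‖f x‖ₑ = ENNReal.ofReal (f x) + ENNReal.ofReal (-f x) := fun x => by
    rcases le_total 0 (f x) with hx | hx
    · rw [Real.enorm_of_nonneg hx, ENNReal.ofReal_of_nonpos (neg_nonpos.2 hx), add_zero]
    · rw [← enorm_neg, Real.enorm_of_nonneg (neg_nonneg.2 hx), ENNReal.ofReal_of_nonpos hx,
        zero_add]
  calc ∫⁻ x, ‖f x‖ₑ ∂μ = ∫⁻ x, ENNReal.ofReal (f x) ∂μ + ∫⁻ x, ENNReal.ofReal (-f x) ∂μ := by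
        simp_rw [henorm]
        exact lintegral_add_left (ENNReal.measurable_ofReal.comp (hf.mono hm le_rfl)) _
    _ ≤ ∫⁻ x, ‖v x‖ₑ ∂μ + ∫⁻ x, ‖v x‖ₑ ∂μ := by
        refine add_le_add (lintegral_ofReal_le_of_forall_setIntegral_eq hm hf h) ?_
        simpa only [enorm_neg] using hneg
    _ = 2 * ∫⁻ x, ‖v x‖ₑ ∂μ := (two_mul _).symm

end Truncation

namespace IsRegCurve

variable {Ω₁ : Type*} [MeasurableSpace Ω₁]

theorem lintegral_enorm_le {ν : Measure (Ω₁ × ℝ)} [IsFiniteMeasure ν] {g : Ω₁ → ℝ}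
    (hg : Measurable g) (h : IsRegCurve ν g) :
    ∫⁻ x, ‖g x.1‖ₑ ∂ν ≤ 2 * ∫⁻ x, ‖x.2‖ₑ ∂ν :=
  lintegral_enorm_le_of_forall_setIntegral_eq measurable_fst.comap_le
    (hg.comp (comap_measurable Prod.fst)) fun _ ⟨A, hA, hs⟩ => hs ▸ (h.2 A hA).symm

variable {β : Type*} [MeasurableSpace β] {ρ : Measure β} [SFinite ρ]
  {κ : Kernel β (Ω₁ × ℝ)} [IsFiniteKernel κ] {g : β → Ω₁ → ℝ}

theorem integrable_compProd (hg : Measurable (Function.uncurry g))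
    (hκ : ∀ b, IsRegCurve (κ b) (g b)) (hint : Integrable (fun p => p.2.2) (ρ ⊗ₘ κ)) :
    Integrable (fun p : β × (Ω₁ × ℝ) => g p.1 p.2.1) (ρ ⊗ₘ κ) := by
  have hgm : Measurable fun p : β × (Ω₁ × ℝ) => g p.1 p.2.1 :=
    hg.comp (measurable_fst.prodMk measurable_snd.fst)
  refine ⟨hgm.aestronglyMeasurable, ?_⟩
  calc ∫⁻ p, ‖g p.1 p.2.1‖ₑ ∂(ρ ⊗ₘ κ) = ∫⁻ b, ∫⁻ x, ‖g b x.1‖ₑ ∂κ b ∂ρ :=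
        Measure.lintegral_compProd hgm.enorm
    _ ≤ ∫⁻ b, 2 * ∫⁻ x, ‖x.2‖ₑ ∂κ b ∂ρ :=
        lintegral_mono fun b => (hκ b).lintegral_enorm_le hg.of_uncurry_left
    _ = 2 * ∫⁻ p, ‖p.2.2‖ₑ ∂(ρ ⊗ₘ κ) := by
        rw [lintegral_const_mul _ measurable_snd.enorm.lintegral_kernel,
          Measure.lintegral_compProd measurable_snd.snd.enorm]
    _ < ∞ := ENNReal.mul_lt_top ENNReal.ofNat_lt_top hint.2

theorem setIntegral_compProd (hg : Measurable (Function.uncurry g))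
    (hκ : ∀ b, IsRegCurve (κ b) (g b)) (hint : Integrable (fun p => p.2.2) (ρ ⊗ₘ κ))
    {B : Set (β × Ω₁)} (hB : MeasurableSet B) :
    ∫ p in (fun p : β × (Ω₁ × ℝ) => (p.1, p.2.1)) ⁻¹' B, p.2.2 ∂(ρ ⊗ₘ κ) =
      ∫ p in (fun p : β × (Ω₁ × ℝ) => (p.1, p.2.1)) ⁻¹' B, g p.1 p.2.1 ∂(ρ ⊗ₘ κ) := by
  have hS : MeasurableSet ((fun p : β × (Ω₁ × ℝ) => (p.1, p.2.1)) ⁻¹' B) :=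
    (measurable_fst.prodMk measurable_snd.fst) hB
  rw [← integral_indicator hS, ← integral_indicator hS,
    Measure.integral_compProd (hint.indicator hS),
    Measure.integral_compProd ((integrable_compProd hg hκ hint).indicator hS)]
  congr 1 with b
  have hBb : MeasurableSet (Prod.fst ⁻¹' (Prod.mk b ⁻¹' B) : Set (Ω₁ × ℝ)) :=
    measurable_fst (measurable_prodMk_left hB)
  exact (integral_indicator hBb).trans
    (((hκ b).2 _ (measurable_prodMk_left hB)).trans (integral_indicator hBb).symm)

end IsRegCurve

theorem IsPosterior.map_swap_compProd {Θ α : Type*} [MeasurableSpace Θ] [MeasurableSpace α]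
    {Q : Measure Θ} [IsFiniteMeasure Q] {S : Kernel Θ α} [IsFiniteKernel S]
    {post : Kernel α Θ} [IsFiniteKernel post] (h : IsPosterior Q S post) :
    (Q ⊗ₘ S).map Prod.swap = (Q.bind fun θ => S θ) ⊗ₘ post := by
  refine Measure.ext_prod fun {A' T} hA' hT => ?_
  rw [Measure.map_apply measurable_swap (hA'.prod hT), Set.preimage_swap_prod,
    Measure.compProd_apply_prod hT hA', Measure.compProd_apply_prod hA' hT]
  exact h A' T hA' hT

theorem map_compProd_prodMkRight_eq_compProd_comp {Θ X Y : Type*} [MeasurableSpace Θ]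
    [MeasurableSpace X] [MeasurableSpace Y] {ρ : Measure (Θ × X)} [SFinite ρ]
    {P : Measure X} [SFinite P] {post : Kernel X Θ} [IsSFiniteKernel post]
    (h : ρ.map Prod.swap = P ⊗ₘ post) (η : Kernel Θ Y) [IsSFiniteKernel η] :
    (ρ ⊗ₘ Kernel.prodMkRight X η).map (fun q => (q.1.2, q.2)) = P ⊗ₘ (η ∘ₖ post) := by
  ext S hS
  have hG : Measurable fun q : X × Θ => η q.2 (Prod.mk q.1 ⁻¹' S) :=
    Kernel.measurable_kernel_prodMk_left (κ := Kernel.prodMkLeft X η)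
      (t := {p : (X × Θ) × Y | (p.1.1, p.2) ∈ S}) ((measurable_fst.fst.prodMk measurable_snd) hS)
  rw [Measure.map_apply (by fun_prop) hS, Measure.compProd_apply (hS.preimage (by fun_prop)),
    Measure.compProd_apply hS]
  calc ∫⁻ q, η q.1 (Prod.mk q.2 ⁻¹' S) ∂ρ
      = ∫⁻ q, η q.2 (Prod.mk q.1 ⁻¹' S) ∂(ρ.map Prod.swap) :=
        (lintegral_map hG measurable_swap).symm
    _ = ∫⁻ x', ∫⁻ θ, η θ (Prod.mk x' ⁻¹' S) ∂post x' ∂P := by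
        rw [h, Measure.lintegral_compProd hG]
    _ = ∫⁻ x', (η ∘ₖ post) x' (Prod.mk x' ⁻¹' S) ∂P := by
        congr with x'
        rw [Kernel.comp_apply' _ _ _ (measurable_prodMk_left hS)]

theorem ProbabilityTheory.Kernel.compProd_prodMkRight_eq_prod {α β γ : Type*}
    [MeasurableSpace α] [MeasurableSpace β] [MeasurableSpace γ]
    (κ : Kernel α β) [IsSFiniteKernel κ] (η : Kernel α γ) [IsSFiniteKernel η] :
    κ ⊗ₖ Kernel.prodMkRight β η = κ ×ₖ η := by
  ext a s hs
  rw [Kernel.compProd_apply hs, Kernel.prod_apply' _ _ _ hs]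
  rfl

theorem PiM_eq_map_compProd {Θ Ω₁ Ω₂ α : Type*} [MeasurableSpace Θ] [MeasurableSpace Ω₁]
    [MeasurableSpace Ω₂] [MeasurableSpace α] (Q : Measure Θ) [SFinite Q]
    (S : Kernel Θ α) [IsSFiniteKernel S] (R : Kernel Θ (Ω₁ × Ω₂)) [IsSFiniteKernel R] :
    PiM Q S R = (Q ⊗ₘ S ⊗ₘ Kernel.prodMkRight α R).map fun q => (q.1.2, q.2, q.1.1) := by
  rw [PiM, ← Kernel.compProd_prodMkRight_eq_prod, ← Measure.compProd_assoc',
    Measure.map_map (by fun_prop) (by fun_prop)]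
  rfl

section Moments

variable {Θ X : Type*} [MeasurableSpace Θ] [MeasurableSpace X]
  (Q : Measure Θ) (S : Kernel Θ X) [IsMarkovKernel S]

theorem lintegral_snd_compProd_prodMkRight [SFinite Q] {Y : Type*} [MeasurableSpace Y]
    (η : Kernel Θ Y) [IsSFiniteKernel η] {f : Y → ℝ≥0∞} (hf : Measurable f) :
    ∫⁻ q, f q.2 ∂(Q ⊗ₘ S ⊗ₘ Kernel.prodMkRight X η) = ∫⁻ θ, ∫⁻ y, f y ∂η θ ∂Q := by
  rw [Measure.lintegral_compProd (f := fun q => f q.2) (hf.comp measurable_snd)]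
  simp only [Kernel.prodMkRight_apply]
  rw [Measure.lintegral_compProd (f := fun q => ∫⁻ y, f y ∂η q.1)
      (hf.lintegral_kernel.comp measurable_fst)]
  simp only [lintegral_const, measure_univ, mul_one]

theorem integrable_snd_snd_compProd_prodMkRight {Ω₁ : Type*} [MeasurableSpace Ω₁]
    [IsFiniteMeasure Q] (η : Kernel Θ (Ω₁ × ℝ)) [IsFiniteKernel η]
    (hsq : ∫⁻ θ, ∫⁻ x, ENNReal.ofReal (x.2 ^ 2) ∂(η θ) ∂Q ≠ ⊤) :
    Integrable (fun q => q.2.2) (Q ⊗ₘ S ⊗ₘ Kernel.prodMkRight X η) := by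
  have hmeas : Measurable fun q : (Θ × X) × (Ω₁ × ℝ) => q.2.2 := measurable_snd.snd
  refine MemLp.integrable one_le_two <|
    (memLp_two_iff_integrable_sq hmeas.aestronglyMeasurable).2
      ⟨(hmeas.pow_const 2).aestronglyMeasurable, ?_⟩
  rw [hasFiniteIntegral_iff_ofReal (ae_of_all _ fun q => sq_nonneg _),
    lintegral_snd_compProd_prodMkRight Q S η (f := fun x => ENNReal.ofReal (x.2 ^ 2))
      (by fun_prop)]
  exact hsq.lt_top

theorem integrable_regCurve_compProd_prodMkRight {Ω₁ : Type*} [MeasurableSpace Ω₁]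
    [IsFiniteMeasure Q] (η : Kernel Θ (Ω₁ × ℝ)) [IsFiniteKernel η]
    (hsq : ∫⁻ θ, ∫⁻ x, ENNReal.ofReal (x.2 ^ 2) ∂(η θ) ∂Q ≠ ⊤) {r : Θ → Ω₁ → ℝ}
    (hr_meas : Measurable (Function.uncurry r)) (hr : ∀ θ, IsRegCurve (η θ) (r θ)) :
    Integrable (fun q => r q.1.1 q.2.1) (Q ⊗ₘ S ⊗ₘ Kernel.prodMkRight X η) :=
  IsRegCurve.integrable_compProd (g := fun q : Θ × X => r q.1)
    (by exact hr_meas.comp (measurable_fst.fst.prodMk measurable_snd)) (fun q => hr q.1)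
    (integrable_snd_snd_compProd_prodMkRight Q S η hsq)

end Moments

namespace IsPosterior

variable {Θ α Ω₁ : Type*} [MeasurableSpace Θ] [MeasurableSpace α] [MeasurableSpace Ω₁]
  {Q : Measure Θ} [IsFiniteMeasure Q] {S : Kernel Θ α} [IsMarkovKernel S]
  {R : Kernel Θ (Ω₁ × ℝ)} [IsFiniteKernel R] {post : Kernel α Θ} [IsFiniteKernel post]
  {r : Θ → Ω₁ → ℝ} {m : α → Ω₁ → ℝ}

theorem map_sample_obs_compProd (h : IsPosterior Q S post) :
    (Q ⊗ₘ S ⊗ₘ Kernel.prodMkRight α R).map (fun q => (q.1.2, q.2)) =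
      (Q.bind fun θ => S θ) ⊗ₘ (R ∘ₖ post) :=
  map_compProd_prodMkRight_eq_compProd_comp h.map_swap_compProd R

theorem integrable_snd_snd_predictive (h : IsPosterior Q S post)
    (hsq : ∫⁻ θ, ∫⁻ x, ENNReal.ofReal (x.2 ^ 2) ∂(R θ) ∂Q ≠ ⊤) :
    Integrable (fun y => y.2.2) ((Q.bind fun θ => S θ) ⊗ₘ (R ∘ₖ post)) := by
  rw [← h.map_sample_obs_compProd]
  exact (integrable_map_measure measurable_snd.snd.aestronglyMeasurable (by fun_prop)).2
    (integrable_snd_snd_compProd_prodMkRight Q S R hsq)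

theorem integrable_predictiveRegCurve (h : IsPosterior Q S post)
    (hsq : ∫⁻ θ, ∫⁻ x, ENNReal.ofReal (x.2 ^ 2) ∂(R θ) ∂Q ≠ ⊤)
    (hm_meas : Measurable (Function.uncurry m))
    (hm : ∀ x', IsRegCurve ((post x').bind fun θ => R θ) (m x')) :
    Integrable (fun q => m q.1.2 q.2.1) (Q ⊗ₘ S ⊗ₘ Kernel.prodMkRight α R) := by
  refine (integrable_map_measure (g := fun y : α × (Ω₁ × ℝ) => m y.1 y.2.1)
    (hm_meas.comp (measurable_fst.prodMk measurable_snd.fst)).aestronglyMeasurable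
    (measurable_fst.snd.prodMk measurable_snd).aemeasurable).1 ?_
  rw [h.map_sample_obs_compProd]
  exact IsRegCurve.integrable_compProd hm_meas hm
    (h.integrable_snd_snd_predictive hsq)

theorem setIntegral_predictiveRegCurve_eq (h : IsPosterior Q S post)
    (hsq : ∫⁻ θ, ∫⁻ x, ENNReal.ofReal (x.2 ^ 2) ∂(R θ) ∂Q ≠ ⊤)
    (hr_meas : Measurable (Function.uncurry r)) (hr : ∀ θ, IsRegCurve (R θ) (r θ))
    (hm_meas : Measurable (Function.uncurry m))
    (hm : ∀ x', IsRegCurve ((post x').bind fun θ => R θ) (m x'))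
    {B : Set (α × Ω₁)} (hB : MeasurableSet B) :
    ∫ q in (fun q => (q.1.2, q.2.1)) ⁻¹' B, m q.1.2 q.2.1 ∂(Q ⊗ₘ S ⊗ₘ Kernel.prodMkRight α R) =
      ∫ q in (fun q => (q.1.2, q.2.1)) ⁻¹' B, r q.1.1 q.2.1
        ∂(Q ⊗ₘ S ⊗ₘ Kernel.prodMkRight α R) := by
  set ρ := Q ⊗ₘ S ⊗ₘ Kernel.prodMkRight α R
  have hobs : Measurable fun q : (Θ × α) × (Ω₁ × ℝ) => (q.1.2, q.2) :=
    measurable_fst.snd.prodMk measurable_snd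
  have hcond : Measurable fun y : α × (Ω₁ × ℝ) => (y.1, y.2.1) :=
    measurable_fst.prodMk measurable_snd.fst
  calc ∫ q in (fun q => (q.1.2, q.2.1)) ⁻¹' B, m q.1.2 q.2.1 ∂ρ
      = ∫ y in (fun y => (y.1, y.2.1)) ⁻¹' B, m y.1 y.2.1 ∂(ρ.map fun q => (q.1.2, q.2)) :=
        (setIntegral_map (hcond hB) (hm_meas.comp hcond).aestronglyMeasurable
          hobs.aemeasurable).symm
    _ = ∫ y in (fun y => (y.1, y.2.1)) ⁻¹' B, y.2.2 ∂(ρ.map fun q => (q.1.2, q.2)) := by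
        rw [h.map_sample_obs_compProd]
        exact (IsRegCurve.setIntegral_compProd hm_meas hm
          (h.integrable_snd_snd_predictive hsq) hB).symm
    _ = ∫ q in (fun q => (q.1.2, q.2.1)) ⁻¹' B, q.2.2 ∂ρ :=
        setIntegral_map (hcond hB) measurable_snd.snd.aestronglyMeasurable hobs.aemeasurable
    _ = ∫ q in (fun q => (q.1.2, q.2.1)) ⁻¹' B, r q.1.1 q.2.1 ∂ρ :=
        IsRegCurve.setIntegral_compProd (g := fun q : Θ × α => r q.1)
          (B := (fun b => (b.1.2, b.2)) ⁻¹' B)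
          (by exact hr_meas.comp (measurable_fst.fst.prodMk measurable_snd)) (fun q => hr q.1)
          (integrable_snd_snd_compProd_prodMkRight Q S R hsq)
          ((measurable_fst.snd.prodMk measurable_snd) hB)

end IsPosterior

theorem stmt_4_general {Θ Ω₁ : Type*} [MeasurableSpace Θ] [MeasurableSpace Ω₁]
    (Q : Measure Θ) [IsProbabilityMeasure Q]
    (R : Kernel Θ (Ω₁ × ℝ)) [IsMarkovKernel R]
    (hsq : ∫⁻ θ, ∫⁻ x, ENNReal.ofReal (x.2 ^ 2) ∂(R θ) ∂Q ≠ ⊤)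
    (Rinf : Kernel Θ (ℕ → Ω₁ × ℝ)) [IsMarkovKernel Rinf]
    (r : Θ → Ω₁ → ℝ) (hr_meas : Measurable (Function.uncurry r))
    (hr : ∀ θ, IsRegCurve (R θ) (r θ))
    (postinf : Kernel (ℕ → Ω₁ × ℝ) Θ) [IsMarkovKernel postinf]
    (hpostinf : IsPosterior Q Rinf postinf)
    (mstarinf : (ℕ → Ω₁ × ℝ) → Ω₁ → ℝ)
    (hmstarinf_meas : Measurable (Function.uncurry mstarinf))
    (hmstarinf : ∀ x', IsRegCurve (Measure.bind (postinf x') fun θ => R θ) (mstarinf x')) :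
    (fun p : (ℕ → Ω₁ × ℝ) × (Ω₁ × ℝ) × Θ => mstarinf p.1 p.2.1.1)
      =ᵐ[PiM Q Rinf R]
    (PiM Q Rinf R)[fun p : (ℕ → Ω₁ × ℝ) × (Ω₁ × ℝ) × Θ => r p.2.2 p.2.1.1 |
      MeasurableSpace.comap (fun p : (ℕ → Ω₁ × ℝ) × (Ω₁ × ℝ) × Θ =>
        (p.1, p.2.1.1)) inferInstance] := by
  have hproj : Measurable fun p : (ℕ → Ω₁ × ℝ) × (Ω₁ × ℝ) × Θ => (p.1, p.2.1.1) :=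
    measurable_fst.prodMk measurable_snd.fst.fst
  have hY : Measurable fun p : (ℕ → Ω₁ × ℝ) × (Ω₁ × ℝ) × Θ => r p.2.2 p.2.1.1 :=
    hr_meas.comp (measurable_snd.snd.prodMk measurable_snd.fst.fst)
  have hM : Measurable fun p : (ℕ → Ω₁ × ℝ) × (Ω₁ × ℝ) × Θ => mstarinf p.1 p.2.1.1 :=
    hmstarinf_meas.comp hproj
  have hπ : Measurable fun q : (Θ × (ℕ → Ω₁ × ℝ)) × (Ω₁ × ℝ) => (q.1.2, q.2, q.1.1) := by
    fun_prop
  rw [PiM_eq_map_compProd]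
  refine ae_eq_condExp_of_forall_setIntegral_eq hproj.comap_le
    ((integrable_map_measure hY.aestronglyMeasurable hπ.aemeasurable).2
      (integrable_regCurve_compProd_prodMkRight Q Rinf R hsq hr_meas hr))
    (fun s _ _ => ((integrable_map_measure hM.aestronglyMeasurable hπ.aemeasurable).2
      (hpostinf.integrable_predictiveRegCurve hsq hmstarinf_meas hmstarinf)).integrableOn)
    ?_ (hmstarinf_meas.comp (comap_measurable _)).aestronglyMeasurable
  rintro _ ⟨B, hB, rfl⟩ -
  rw [setIntegral_map (hproj hB) hM.aestronglyMeasurable hπ.aemeasurable,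
    setIntegral_map (hproj hB) hY.aestronglyMeasurable hπ.aemeasurable]
  exact hpostinf.setIntegral_predictiveRegCurve_eq hsq hr_meas hr hmstarinf_meas hmstarinf hB

/-- Lemma, part (ii): with `Y(x',x,θ) := E_{R_θ}(p₂ | p₁ = x₁)`, the regression
curve of `p₂` on `p₁` with respect to the posterior predictive distribution based on the whole
infinite sample is, `Π_ℕ`-a.e., the conditional expectation of `Y` under `Π_ℕ` given the whole
sample and the first coordinate of the new observation. -/
theorem stmt_4 {Θ Ω₁ : Type*} [MeasurableSpace Θ] [MeasurableSpace Ω₁]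
    (Q : Measure Θ) [IsProbabilityMeasure Q]
    (R : Kernel Θ (Ω₁ × ℝ)) [IsMarkovKernel R]
    (hsq : ∫⁻ θ, ∫⁻ x, ENNReal.ofReal (x.2 ^ 2) ∂(R θ) ∂Q ≠ ⊤)
    (Rinf : Kernel Θ (ℕ → Ω₁ × ℝ)) [IsMarkovKernel Rinf]
    (hRinf : ∀ θ n, (Rinf θ).map (fun x (i : Fin n) => x i) = Measure.pi fun _ : Fin n => R θ)
    (r : Θ → Ω₁ → ℝ) (hr_meas : Measurable (Function.uncurry r))
    (hr : ∀ θ, IsRegCurve (R θ) (r θ))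
    (postinf : Kernel (ℕ → Ω₁ × ℝ) Θ) [IsMarkovKernel postinf]
    (hpostinf : IsPosterior Q Rinf postinf)
    (mstarinf : (ℕ → Ω₁ × ℝ) → Ω₁ → ℝ)
    (hmstarinf_meas : Measurable (Function.uncurry mstarinf))
    (hmstarinf : ∀ x', IsRegCurve (Measure.bind (postinf x') fun θ => R θ) (mstarinf x')) :
    (fun p : (ℕ → Ω₁ × ℝ) × (Ω₁ × ℝ) × Θ => mstarinf p.1 p.2.1.1)
      =ᵐ[PiM Q Rinf R]
    (PiM Q Rinf R)[fun p : (ℕ → Ω₁ × ℝ) × (Ω₁ × ℝ) × Θ => r p.2.2 p.2.1.1 |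
      MeasurableSpace.comap (fun p : (ℕ → Ω₁ × ℝ) × (Ω₁ × ℝ) × Θ =>
        (p.1, p.2.1.1)) inferInstance] :=
  stmt_4_general Q R hsq Rinf r hr_meas hr postinf hpostinf mstarinf hmstarinf_meas hmstarinf
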